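/- arXiv:2302.12201 — 5 statements merged into one kernel-verified Lean document; each statement's English description precedes it below -/
import Mathlib

section
/- Let M^β be a matching matrix on n nodes with balancing parameter β ∈ (0,1], and let E(M^β) denote the set of edges of the underlying matching. Then for every x ∈ ℝⁿ: Φ(x) − Φ(M^β · x) = ((1 − (1−β)²)/2) · Φ_{E(M^β)}(x). -/
open MeasureTheory ProbabilityTheory Real
open scoped ENNReal BigOperators

/-- The quadratic node potential `Φ(x) = Σᵢ (xᵢ - x̄)²`. -/
noncomputable def nodePotential {n : ℕ} (x : Fin n → ℝ) : ℝ :=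
  ∑ i, (x i - (∑ j, x j) / n) ^ 2

/-- The matching matrix with balancing parameter `β` of the matching encoded by the
involution `f` (node `i` is matched to `f i` when `f i ≠ i`, and unmatched otherwise). -/
noncomputable def matchingMatrix {n : ℕ} (β : ℝ) (f : Fin n → Fin n) :
    Matrix (Fin n) (Fin n) ℝ :=
  Matrix.of fun i j =>
    if i = j then (if f i = i then 1 else 1 - β / 2)
    else if f i = j then β / 2 else 0

/-- The quadratic edge potential over the edges of the matching encoded by the
involution `f`: `Φ_{E(M)}(x) = Σ_{{i,j} ∈ E(M)} (xᵢ - xⱼ)²` (each unordered edge counted once). -/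
noncomputable def matchEdgePotential {n : ℕ} (f : Fin n → Fin n) (x : Fin n → ℝ) : ℝ :=
  (1 / 2) * ∑ i, (if f i = i then 0 else (x i - x (f i)) ^ 2)

/-- For a matching matrix `M^β` with balancing parameter `β ∈ (0,1]`,
`Φ(x) − Φ(M^β · x) = ((1 − (1−β)²)/2) · Φ_{E(M^β)}(x)` for every `x ∈ ℝⁿ`. -/
theorem stmt4 (n : ℕ) (β : ℝ) (hβ0 : 0 < β) (hβ1 : β ≤ 1)
    (f : Fin n → Fin n) (hf : ∀ i, f (f i) = i) (x : Fin n → ℝ) :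
    nodePotential x - nodePotential ((matchingMatrix β f).mulVec x) =
      ((1 - (1 - β) ^ 2) / 2) * matchEdgePotential f x := by
  classical
  have hfinj : Function.Injective f := Function.Involutive.injective hf
  -- resumming along the involution
  have key : ∀ G : Fin n → ℝ, ∑ i, G (f i) = ∑ i, G i := fun G =>
    Equiv.sum_comp (Function.Involutive.toPerm f hf) G
  set d : Fin n → ℝ := fun i => if f i = i then 0 else x i - x (f i) with hd
  have hcond : ∀ i, ¬ f i = i → ¬ f (f i) = f i := by
    intro i h hc
    exact h (hfinj hc)
  -- d ∘ f = -d
  have hdf : ∀ i, d (f i) = - d i := by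
    intro i
    by_cases h : f i = i
    · rw [h]; simp [hd, h]
    · simp only [hd, if_neg h, if_neg (hcond i h), hf i]; ring
  -- sum of d is zero
  have hd0 : ∑ i, d i = 0 := by
    have h1 := key d
    have h2 : ∑ i, d (f i) = - ∑ i, d i := by
      rw [← Finset.sum_neg_distrib]
      exact Finset.sum_congr rfl fun i _ => hdf i
    linarith [h1, h2]
  -- ∑ d i * x (f i) = - ∑ d i * x i
  have hdx : ∑ i, d i * x (f i) = - ∑ i, d i * x i := by
    have h1 := key (fun i => d i * x (f i))
    have h2 : ∑ i, d (f i) * x (f (f i)) = ∑ i, (- d i) * x i := by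
      refine Finset.sum_congr rfl fun i _ => ?_
      rw [hdf i, hf i]
    rw [← h1]
    simp only [h2, neg_mul, Finset.sum_neg_distrib]
  -- T = 2 S1
  have hT : ∑ i, d i ^ 2 = 2 * ∑ i, d i * x i := by
    have heq : ∀ i, d i ^ 2 = d i * x i - d i * x (f i) := by
      intro i
      by_cases h : f i = i
      · simp [hd, h]
      · simp only [hd, if_neg h]; ring
    rw [Finset.sum_congr rfl fun i _ => heq i, Finset.sum_sub_distrib, hdx]
    ring
  -- mulVec formula
  have hMx : ∀ i, (matchingMatrix β f).mulVec x i = x i - β / 2 * d i := by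
    intro i
    rw [Matrix.mulVec, dotProduct]
    by_cases h : f i = i
    · have heq : ∀ j, matchingMatrix β f i j * x j = if j = i then x j else 0 := by
        intro j
        by_cases hij : i = j
        · subst hij; simp [matchingMatrix, h]
        · have h2 : ¬ j = i := fun hc => hij hc.symm
          have h3 : ¬ f i = j := fun hc => hij (h.symm.trans hc)
          simp [matchingMatrix, hij, h2, h3]
      rw [Finset.sum_congr rfl fun j _ => heq j, Finset.sum_ite_eq' Finset.univ i x]
      simp [hd, h]
    · have heq : ∀ j, matchingMatrix β f i j * x j
          = (if j = i then (1 - β / 2) * x j else 0) + (if j = f i then β / 2 * x j else 0) := by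
        intro j
        by_cases hij : i = j
        · subst hij
          have h1 : ¬ i = f i := fun hc => h hc.symm
          simp [matchingMatrix, h, h1]
        · have h2 : ¬ j = i := fun hc => hij hc.symm
          by_cases hfj : f i = j
          · subst hfj; simp [matchingMatrix, hij, h2]
          · have h3 : ¬ j = f i := fun hc => hfj hc.symm
            simp [matchingMatrix, hij, hfj, h2, h3]
      rw [Finset.sum_congr rfl fun j _ => heq j, Finset.sum_add_distrib,
        Finset.sum_ite_eq' Finset.univ i (fun j => (1 - β / 2) * x j),
        Finset.sum_ite_eq' Finset.univ (f i) (fun j => β / 2 * x j)]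
      simp only [Finset.mem_univ, if_true, hd, if_neg h]
      ring
  -- means agree
  have hmean : ∑ i, (matchingMatrix β f).mulVec x i = ∑ i, x i := by
    rw [Finset.sum_congr rfl fun i _ => hMx i, Finset.sum_sub_distrib,
      ← Finset.mul_sum, hd0]
    ring
  -- edge potential in terms of d
  have hE : matchEdgePotential f x = (1 / 2) * ∑ i, d i ^ 2 := by
    rw [matchEdgePotential]
    congr 1
    refine Finset.sum_congr rfl fun i _ => ?_
    simp only [hd]
    split <;> simp
  set m : ℝ := (∑ j, x j) / n with hm
  have hΦ : nodePotential ((matchingMatrix β f).mulVec x)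
      = ∑ i, ((x i - m) - β / 2 * d i) ^ 2 := by
    rw [nodePotential, hmean]
    refine Finset.sum_congr rfl fun i _ => ?_
    rw [hMx i]
    ring
  rw [hΦ, nodePotential, hE, ← hm]
  have expand : ∑ i, ((x i - m) - β / 2 * d i) ^ 2
      = ∑ i, (x i - m) ^ 2 - β * (∑ i, d i * x i) + β * m * (∑ i, d i)
        + β ^ 2 / 4 * ∑ i, d i ^ 2 := by
    rw [Finset.mul_sum, Finset.mul_sum, Finset.mul_sum, ← Finset.sum_sub_distrib,
      ← Finset.sum_add_distrib, ← Finset.sum_add_distrib]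
    refine Finset.sum_congr rfl fun i _ => ?_
    ring
  rw [expand, hd0, hT]
  ring
end

section
/- Let m(1), …, m(t) be an arbitrary sequence of matching matrices on n nodes with balancing parameter β ∈ (0,1], and for 1 ≤ τ ≤ t let M^{[τ+1,t]} := m(t)·m(t−1)⋯m(τ+1) (the identity matrix when τ + 1 > t). Then for every node k ∈ [n]: Σ_{τ=1}^{t} Σ_{{i,j}∈E(m(τ))} ( M^{[τ+1,t]}_{k,i} − M^{[τ+1,t]}_{k,j} )² ≤ 2/β, where E(m(τ)) denotes the edge set of the matching underlying m(τ). -/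
open MeasureTheory ProbabilityTheory Real
open scoped ENNReal BigOperators

/-- The backwards product `M^{[τ,t]} = M(t)·M(t−1)···M(τ)` of a sequence of matrices,
equal to the identity matrix when `τ > t`. -/
noncomputable def matProd {n : ℕ} (M : ℕ → Matrix (Fin n) (Fin n) ℝ) (τ t : ℕ) :
    Matrix (Fin n) (Fin n) ℝ :=
  (((List.range' τ (t + 1 - τ)).map M).reverse).prod


lemma matProd_step {n : ℕ} (M : ℕ → Matrix (Fin n) (Fin n) ℝ) {τ t : ℕ} (h2 : τ ≤ t) :
    matProd M τ t = matProd M (τ + 1) t * M τ := by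
  unfold matProd
  have h : t + 1 - τ = (t + 1 - (τ + 1)) + 1 := by omega
  rw [h, List.range'_succ, List.map_cons, List.reverse_cons, List.prod_append,
    List.prod_singleton]

lemma matProd_nil {n : ℕ} (M : ℕ → Matrix (Fin n) (Fin n) ℝ) (t : ℕ) :
    matProd M (t + 1) t = 1 := by
  unfold matProd
  have h : t + 1 - (t + 1) = 0 := by omega
  simp [h]

lemma row_apply {n : ℕ} (β : ℝ) (f : Fin n → Fin n) (hf : ∀ i, f (f i) = i)
    (v : Fin n → ℝ) (i : Fin n) :
    ∑ j, v j * matchingMatrix β f j i =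
      if f i = i then v i else (1 - β / 2) * v i + β / 2 * v (f i) := by
  by_cases h : f i = i
  · rw [if_pos h, Finset.sum_eq_single i]
    · simp [matchingMatrix, h]
    · intro j _ hj
      have hfj : f j ≠ i := by
        intro he
        apply hj
        rw [← hf j, he, h]
      simp [matchingMatrix, hj, hfj]
    · simp
  · rw [if_neg h]
    have hne : i ≠ f i := fun e => h e.symm
    have hsub : ∑ j ∈ ({i, f i} : Finset (Fin n)), v j * matchingMatrix β f j i
        = ∑ j, v j * matchingMatrix β f j i := by
      apply Finset.sum_subset (Finset.subset_univ _)
      intro x _ hx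
      simp only [Finset.mem_insert, Finset.mem_singleton, not_or] at hx
      obtain ⟨hx1, hx2⟩ := hx
      have hfx : f x ≠ i := by
        intro he
        apply hx2
        rw [← hf x, he]
      simp [matchingMatrix, hx1, hfx]
    rw [← hsub, Finset.sum_pair hne]
    have h1 : matchingMatrix β f i i = 1 - β / 2 := by simp [matchingMatrix, h]
    have h2 : matchingMatrix β f (f i) i = β / 2 := by
      simp [matchingMatrix, h, hf i, Ne.symm hne]
    rw [h1, h2]
    ring

lemma drop_eq {n : ℕ} (β : ℝ) (f : Fin n → Fin n) (hf : ∀ i, f (f i) = i) (v : Fin n → ℝ) :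
    ∑ i, v i ^ 2 - ∑ i, (∑ j, v j * matchingMatrix β f j i) ^ 2
      = β / 2 * (1 - β / 2) * ∑ i, (if f i = i then 0 else (v i - v (f i)) ^ 2) := by
  have hw : ∀ i, (∑ j, v j * matchingMatrix β f j i)
      = if f i = i then v i else (1 - β / 2) * v i + β / 2 * v (f i) :=
    row_apply β f hf v
  simp only [hw]
  set g : Fin n → ℝ := fun i =>
    v i ^ 2 - (if f i = i then v i else (1 - β / 2) * v i + β / 2 * v (f i)) ^ 2 with hg
  have hL : ∑ i, v i ^ 2 - ∑ i, (if f i = i then v i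
      else (1 - β / 2) * v i + β / 2 * v (f i)) ^ 2 = ∑ i, g i := by
    rw [← Finset.sum_sub_distrib]
  rw [hL]
  have hinv : Function.Involutive f := hf
  have hsym : ∑ i, g (f i) = ∑ i, g i := by
    exact Fintype.sum_bijective f hinv.bijective _ _ (fun i => rfl)
  have hpt : ∀ i, g i + g (f i)
      = 2 * (β / 2 * (1 - β / 2)) * (if f i = i then 0 else (v i - v (f i)) ^ 2) := by
    intro i
    by_cases h : f i = i
    · simp [hg, h]
    · have h' : ¬ (i = f i) := fun e => h e.symm
      simp only [hg, hf i, if_neg h, if_neg h']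
      ring
  have h2 : 2 * ∑ i, g i
      = 2 * (β / 2 * (1 - β / 2)) * ∑ i, (if f i = i then 0 else (v i - v (f i)) ^ 2) := by
    calc 2 * ∑ i, g i = ∑ i, g i + ∑ i, g (f i) := by rw [hsym]; ring
    _ = ∑ i, (g i + g (f i)) := by rw [← Finset.sum_add_distrib]
    _ = ∑ i, 2 * (β / 2 * (1 - β / 2)) * (if f i = i then 0 else (v i - v (f i)) ^ 2) := by
        exact Finset.sum_congr rfl fun i _ => hpt i
    _ = 2 * (β / 2 * (1 - β / 2)) * ∑ i, (if f i = i then 0 else (v i - v (f i)) ^ 2) := by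
        rw [Finset.mul_sum]
  linarith

lemma telescope (G : ℕ → ℝ) : ∀ m : ℕ,
    ∑ τ ∈ Finset.Icc 1 m, (G τ - G (τ - 1)) = G m - G 0
  | 0 => by simp
  | m + 1 => by
    rw [Finset.sum_Icc_succ_top (by omega : 1 ≤ m + 1), telescope G m]
    simp

/-- For an arbitrary sequence `m(1), …, m(t)` of matching matrices with
balancing parameter `β ∈ (0,1]` (encoded by involutions `f τ`), and
`M^{[τ+1,t]} = m(t)···m(τ+1)`, for every node `k`:
`Σ_{τ=1}^{t} Σ_{{i,j} ∈ E(m(τ))} (M^{[τ+1,t]}_{k,i} − M^{[τ+1,t]}_{k,j})² ≤ 2/β`.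
Each unordered edge `{i, f τ i}` (with `f τ i ≠ i`) is counted once, whence the factor `1/2`
in front of the sum over `i`. -/
theorem stmt12 (n t : ℕ) (β : ℝ) (hβ0 : 0 < β) (hβ1 : β ≤ 1)
    (f : ℕ → Fin n → Fin n)
    (hf : ∀ τ ∈ Finset.Icc 1 t, ∀ i, f τ (f τ i) = i)
    (k : Fin n) :
    ∑ τ ∈ Finset.Icc 1 t,
        (1 / 2) * ∑ i, (if f τ i = i then 0 else
          (matProd (fun s => matchingMatrix β (f s)) (τ + 1) t k i -
            matProd (fun s => matchingMatrix β (f s)) (τ + 1) t k (f τ i)) ^ 2)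
      ≤ 2 / β := by
  classical
  set M : ℕ → Matrix (Fin n) (Fin n) ℝ := fun s => matchingMatrix β (f s) with hM
  set Φ : ℕ → ℝ := fun τ => ∑ i, (matProd M (τ + 1) t k i) ^ 2 with hΦ
  have key : ∀ τ ∈ Finset.Icc 1 t,
      (1 / 2) * ∑ i, (if f τ i = i then 0 else
          (matProd M (τ + 1) t k i - matProd M (τ + 1) t k (f τ i)) ^ 2)
        ≤ 2 / β * (Φ τ - Φ (τ - 1)) := by
    intro τ hτ
    obtain ⟨h1, h2⟩ := Finset.mem_Icc.mp hτ
    have hτ1 : τ - 1 + 1 = τ := by omega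
    set v : Fin n → ℝ := fun i => matProd M (τ + 1) t k i with hv
    have hw : ∀ i, matProd M τ t k i = ∑ j, v j * matchingMatrix β (f τ) j i := by
      intro i
      rw [matProd_step M h2, Matrix.mul_apply]
    have hΦτ : Φ (τ - 1) = ∑ i, (∑ j, v j * matchingMatrix β (f τ) j i) ^ 2 := by
      simp only [hΦ, hτ1]
      exact Finset.sum_congr rfl fun i _ => by rw [hw i]
    have hdrop := drop_eq β (f τ) (hf τ hτ) v
    have hS : 0 ≤ ∑ i, (if f τ i = i then 0 else (v i - v (f τ i)) ^ 2) := by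
      apply Finset.sum_nonneg
      intro i _
      split <;> positivity
    have hΦd : Φ τ - Φ (τ - 1)
        = β / 2 * (1 - β / 2) * ∑ i, (if f τ i = i then 0 else (v i - v (f τ i)) ^ 2) := by
      rw [hΦτ]
      exact hdrop
    rw [hΦd]
    have hmul : 2 / β * (β / 2 * (1 - β / 2)
          * ∑ i, (if f τ i = i then 0 else (v i - v (f τ i)) ^ 2))
        = (1 - β / 2) * ∑ i, (if f τ i = i then 0 else (v i - v (f τ i)) ^ 2) := by
      field_simp
    rw [hmul]
    nlinarith [hS]
  have hΦt : Φ t = 1 := by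
    simp only [hΦ]
    rw [matProd_nil]
    simp [Matrix.one_apply, apply_ite (fun x : ℝ => x ^ 2)]
  have hΦ0 : 0 ≤ Φ 0 := Finset.sum_nonneg fun i _ => sq_nonneg _
  have htel : ∑ τ ∈ Finset.Icc 1 t, (Φ τ - Φ (τ - 1)) = Φ t - Φ 0 :=
    telescope Φ t
  calc ∑ τ ∈ Finset.Icc 1 t,
        (1 / 2) * ∑ i, (if f τ i = i then 0 else
          (matProd M (τ + 1) t k i - matProd M (τ + 1) t k (f τ i)) ^ 2)
      ≤ ∑ τ ∈ Finset.Icc 1 t, 2 / β * (Φ τ - Φ (τ - 1)) := Finset.sum_le_sum key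
    _ = 2 / β * (Φ t - Φ 0) := by rw [← Finset.mul_sum, htel]
    _ ≤ 2 / β * 1 := by
        apply mul_le_mul_of_nonneg_left _ (by positivity)
        linarith
    _ = 2 / β := mul_one _
end

section
/- Let X be a nonnegative real random variable, let n > 1 be a real number, and let c, C > 0. If for all γ > 0 it holds that P[X ≥ (γ + 1)·C] ≤ c·n^{−γ}, then E[X] ≤ C·(1 + c/log(n)). -/
open MeasureTheory ProbabilityTheory Real
open scoped ENNReal BigOperators

lemma exp_decay_integral (a : ℝ) {b : ℝ} (hb : 0 < b) :
    ∫ x in Set.Ioi a, Real.exp (-(b * (x - a))) = 1 / b := by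
  have h := MeasureTheory.integral_comp_mul_left_Ioi
      (fun y => Real.exp (b * a) * Real.exp (-y)) a hb
  have h1 : (fun x => Real.exp (b * a) * Real.exp (-(b * x)))
      = fun x => Real.exp (-(b * (x - a))) := by
    funext x
    rw [← Real.exp_add]
    ring_nf
  simp only [h1] at h
  rw [h, MeasureTheory.integral_const_mul, integral_exp_neg_Ioi, ← Real.exp_add]
  simp [hb.ne']

/-- If a nonnegative random variable `X` satisfies
`P[X ≥ (γ+1)·C] ≤ c·n^{−γ}` for all `γ > 0` (with `n > 1`, `c, C > 0`),
then `E[X] ≤ C·(1 + c/log n)`. -/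
theorem stmt13 {Ω : Type*} [MeasureSpace Ω] [IsProbabilityMeasure (ℙ : Measure Ω)]
    (X : Ω → ℝ) (hXmeas : Measurable X) (hX0 : ∀ ω, 0 ≤ X ω)
    (n c C : ℝ) (hn : 1 < n) (hc : 0 < c) (hC : 0 < C)
    (htail : ∀ γ : ℝ, 0 < γ → (ℙ {ω | (γ + 1) * C ≤ X ω}).toReal ≤ c * n ^ (-γ)) :
    ∫ ω, X ω ≤ C * (1 + c / Real.log n) := by
  have hlogn : 0 < Real.log n := Real.log_pos hn
  set b : ℝ := Real.log n / C with hbdef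
  have hb : 0 < b := div_pos hlogn hC
  have hrepr : ∫ ω, X ω = (∫⁻ ω, ENNReal.ofReal (X ω)).toReal :=
    integral_eq_lintegral_of_nonneg_ae (Filter.Eventually.of_forall hX0)
      hXmeas.aestronglyMeasurable
  have hlayer : ∫⁻ ω, ENNReal.ofReal (X ω)
      = ∫⁻ t in Set.Ioi (0:ℝ), ℙ {ω | t ≤ X ω} :=
    lintegral_eq_lintegral_meas_le ℙ (Filter.Eventually.of_forall hX0)
      hXmeas.aemeasurable
  -- bound on (0, C]
  have bound1 : ∫⁻ t in Set.Ioc (0:ℝ) C, ℙ {ω | t ≤ X ω} ≤ ENNReal.ofReal C := by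
    calc ∫⁻ t in Set.Ioc (0:ℝ) C, ℙ {ω | t ≤ X ω}
        ≤ ∫⁻ _ in Set.Ioc (0:ℝ) C, 1 := lintegral_mono fun t => prob_le_one
      _ = volume (Set.Ioc (0:ℝ) C) := setLIntegral_one _
      _ = ENNReal.ofReal C := by rw [Real.volume_Ioc, sub_zero]
  -- pointwise tail bound on (C, ∞)
  have hpt : ∀ t ∈ Set.Ioi C,
      ℙ {ω | t ≤ X ω} ≤ ENNReal.ofReal (c * Real.exp (-(b * (t - C)))) := by
    intro t ht
    have htC : C < t := ht
    have hγ : 0 < t / C - 1 := by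
      rw [sub_pos, lt_div_iff₀ hC, one_mul]; exact htC
    have hset : {ω | (t / C - 1 + 1) * C ≤ X ω} = {ω | t ≤ X ω} := by
      have : (t / C - 1 + 1) * C = t := by field_simp; ring
      rw [this]
    have h1 := htail _ hγ
    rw [hset] at h1
    have h2 : n ^ (-(t / C - 1)) = Real.exp (-(b * (t - C))) := by
      rw [Real.rpow_def_of_pos (by linarith : (0:ℝ) < n)]
      rw [hbdef]
      field_simp
    rw [h2] at h1
    calc ℙ {ω | t ≤ X ω} = ENNReal.ofReal (ℙ {ω | t ≤ X ω}).toReal :=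
          (ENNReal.ofReal_toReal (measure_ne_top _ _)).symm
      _ ≤ ENNReal.ofReal (c * Real.exp (-(b * (t - C)))) := ENNReal.ofReal_le_ofReal h1
  -- integrability of the exponential bound
  have hfun : (fun t => c * Real.exp (-(b * (t - C))))
      = fun t => (c * Real.exp (b * C)) * Real.exp (-b * t) := by
    funext t
    rw [mul_assoc, ← Real.exp_add]
    ring_nf
  have hint : IntegrableOn (fun t => c * Real.exp (-(b * (t - C)))) (Set.Ioi C) := by
    rw [hfun]
    exact (exp_neg_integrableOn_Ioi C hb).const_mul _
  -- value of the exponential integral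
  have hval : ∫ t in Set.Ioi C, c * Real.exp (-(b * (t - C))) = c * C / Real.log n := by
    rw [MeasureTheory.integral_const_mul, exp_decay_integral C hb, hbdef]
    field_simp
  have bound2 : ∫⁻ t in Set.Ioi C, ℙ {ω | t ≤ X ω}
      ≤ ENNReal.ofReal (c * C / Real.log n) := by
    calc ∫⁻ t in Set.Ioi C, ℙ {ω | t ≤ X ω}
        ≤ ∫⁻ t in Set.Ioi C, ENNReal.ofReal (c * Real.exp (-(b * (t - C)))) := by
          refine setLIntegral_mono' measurableSet_Ioi hpt
      _ = ENNReal.ofReal (∫ t in Set.Ioi C, c * Real.exp (-(b * (t - C)))) := by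
          rw [← ofReal_integral_eq_lintegral_ofReal hint]
          exact Filter.Eventually.of_forall fun t =>
            mul_nonneg hc.le (Real.exp_nonneg _)
      _ = ENNReal.ofReal (c * C / Real.log n) := by rw [hval]
  -- combine
  have hsplit : ∫⁻ t in Set.Ioi (0:ℝ), ℙ {ω | t ≤ X ω}
      = (∫⁻ t in Set.Ioc (0:ℝ) C, ℙ {ω | t ≤ X ω})
        + ∫⁻ t in Set.Ioi C, ℙ {ω | t ≤ X ω} := by
    rw [← lintegral_union measurableSet_Ioi Set.Ioc_disjoint_Ioi_same,
      Set.Ioc_union_Ioi_eq_Ioi hC.le]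
  have hRHS : 0 ≤ C * (1 + c / Real.log n) := by positivity
  have hmain : ∫⁻ ω, ENNReal.ofReal (X ω)
      ≤ ENNReal.ofReal (C * (1 + c / Real.log n)) := by
    rw [hlayer, hsplit]
    calc (∫⁻ t in Set.Ioc (0:ℝ) C, ℙ {ω | t ≤ X ω})
          + ∫⁻ t in Set.Ioi C, ℙ {ω | t ≤ X ω}
        ≤ ENNReal.ofReal C + ENNReal.ofReal (c * C / Real.log n) :=
          add_le_add bound1 bound2
      _ = ENNReal.ofReal (C + c * C / Real.log n) := by
          rw [← ENNReal.ofReal_add hC.le (by positivity)]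
      _ = ENNReal.ofReal (C * (1 + c / Real.log n)) := by
          congr 1; field_simp
  rw [hrepr]
  calc (∫⁻ ω, ENNReal.ofReal (X ω)).toReal
      ≤ (ENNReal.ofReal (C * (1 + c / Real.log n))).toReal :=
        ENNReal.toReal_mono ENNReal.ofReal_ne_top hmain
    _ = C * (1 + c / Real.log n) := ENNReal.toReal_ofReal hRHS
end

section
/- Let (X(t))_{t=0}^{n} be a martingale with respect to a filtration (F(t))_{t=0}^{n} such that |X(t) − X(t−1)| ≤ 1 for all t ∈ [n]. Define the quadratic characteristic ⟨X⟩_n := Σ_{τ=1}^{n} E[(X(τ) − X(τ−1))² | F(τ−1)]. Then for every ε ≥ 0 and v > 0: P[ |X(n) − X(0)| ≥ ε/3 + v·sqrt(2ε) ] ≤ 2·( e^{−ε} + P[⟨X⟩_n > v²] ). -/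
open MeasureTheory ProbabilityTheory Real
open scoped ENNReal BigOperators
open scoped Nat

set_option maxHeartbeats 1000000


lemma exp_mul_le (l x : ℝ) (hl : 0 ≤ l) (hx : |x| ≤ 1) :
    Real.exp (l * x) ≤ 1 + l * x + (Real.exp l - 1 - l) * x ^ 2 := by
  have hexp : ∀ y : ℝ, Real.exp y = ∑' n : ℕ, y ^ n / (n ! : ℝ) := by
    intro y
    rw [Real.exp_eq_exp_ℝ, NormedSpace.exp_eq_tsum_div]
  have hsum : ∀ y : ℝ, Summable (fun n : ℕ => y ^ n / (n ! : ℝ)) := Real.summable_pow_div_factorial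
  have hshift : ∀ y : ℝ, Real.exp y = 1 + y + ∑' k : ℕ, y ^ (k + 2) / ((k + 2)! : ℝ) := by
    intro y
    rw [hexp y, (hsum y).tsum_eq_zero_add]
    have h2 : Summable (fun n : ℕ => y ^ (n + 1) / ((n + 1)! : ℝ)) :=
      (summable_nat_add_iff 1).2 (hsum y)
    rw [h2.tsum_eq_zero_add]
    have he : (fun b : ℕ => y ^ (b + 1 + 1) / ((b + 1 + 1)! : ℝ)) =
        fun k : ℕ => y ^ (k + 2) / ((k + 2)! : ℝ) := rfl
    rw [he]
    norm_num [Nat.factorial]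
    ring
  have key : ∑' k : ℕ, (l * x) ^ (k + 2) / ((k + 2)! : ℝ) ≤
      x ^ 2 * ∑' k : ℕ, l ^ (k + 2) / ((k + 2)! : ℝ) := by
    rw [← tsum_mul_left]
    refine Summable.tsum_le_tsum (fun k => ?_) ((summable_nat_add_iff 2).2 (hsum (l * x)))
      (((summable_nat_add_iff 2).2 (hsum l)).mul_left _)
    have h1 : (l * x) ^ (k + 2) ≤ x ^ 2 * l ^ (k + 2) := by
      have : (l * x) ^ (k + 2) ≤ |(l * x) ^ (k + 2)| := le_abs_self _
      refine this.trans ?_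
      rw [abs_pow, abs_mul, abs_of_nonneg hl, mul_pow]
      have hxk : |x| ^ (k + 2) ≤ x ^ 2 := by
        calc |x| ^ (k + 2) ≤ |x| ^ 2 := pow_le_pow_of_le_one (abs_nonneg x) hx (by omega)
        _ = x ^ 2 := sq_abs x
      calc l ^ (k+2) * |x| ^ (k+2) ≤ l ^ (k+2) * x ^ 2 :=
        mul_le_mul_of_nonneg_left hxk (pow_nonneg hl _)
      _ = x ^ 2 * l ^ (k + 2) := mul_comm _ _
    have hfac : (0:ℝ) < ((k + 2)! : ℝ) := by positivity
    rw [div_le_iff₀ hfac] at *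
    calc (l*x)^(k+2) ≤ x ^ 2 * l ^ (k+2) := h1
    _ = x ^ 2 * (l ^ (k+2) / ((k+2)! : ℝ)) * ((k+2)! : ℝ) := by field_simp
  have h1 := hshift (l * x)
  have h2 := hshift l
  have : Real.exp l - 1 - l = ∑' k : ℕ, l ^ (k + 2) / ((k + 2)! : ℝ) := by rw [h2]; ring
  rw [h1, this]
  linarith [key]


lemma quad_pos {s : ℝ} (hs : 0 ≤ s) : (0:ℝ) < 1 + s + s ^ 2 / 6 := by nlinarith

lemma log_ineq {s : ℝ} (hs : 0 ≤ s) : 3 * s / (3 + s) ≤ Real.log (1 + s + s ^ 2 / 6) := by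
  set f : ℝ → ℝ := fun x => Real.log (1 + x + x ^ 2 / 6) - 3 * x / (3 + x) with hf
  have hder : ∀ x : ℝ, 0 ≤ x →
      HasDerivAt f ((1 + x / 3) / (1 + x + x ^ 2 / 6) - 9 / (3 + x) ^ 2) x := by
    intro x hx
    have hq : (0:ℝ) < 1 + x + x ^ 2 / 6 := quad_pos hx
    have h3 : (3 + x) ≠ 0 := by nlinarith
    have h1 : HasDerivAt (fun y : ℝ => 1 + y + y ^ 2 / 6) (1 + x / 3) x := by
      have := ((hasDerivAt_id x).const_add 1).add
        (((hasDerivAt_pow 2 x).div_const 6))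
      refine this.congr_deriv ?_
      push_cast; ring
    have h2 : HasDerivAt (fun y : ℝ => Real.log (1 + y + y ^ 2 / 6))
        ((1 + x / 3) / (1 + x + x ^ 2 / 6)) x := h1.log hq.ne'
    have h4 : HasDerivAt (fun y : ℝ => 3 * y / (3 + y)) (9 / (3 + x) ^ 2) x := by
      have hnum : HasDerivAt (fun y : ℝ => 3 * y) 3 x := by
        simpa using (hasDerivAt_id x).const_mul 3
      have hden : HasDerivAt (fun y : ℝ => 3 + y) 1 x := (hasDerivAt_id x).const_add 3
      have := hnum.div hden h3
      refine this.congr_deriv ?_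
      field_simp
      ring
    exact h2.sub h4
  have hmono : MonotoneOn f (Set.Ici 0) := by
    refine monotoneOn_of_deriv_nonneg (convex_Ici 0) ?_ ?_ ?_
    · exact fun x hx => ((hder x hx).differentiableAt.continuousAt.continuousWithinAt)
    · intro x hx
      rw [interior_Ici] at hx
      exact (hder x (le_of_lt hx)).differentiableAt.differentiableWithinAt
    · intro x hx
      rw [interior_Ici] at hx
      have hx' : (0:ℝ) < x := hx
      rw [(hder x hx.le).deriv]
      have hq : (0:ℝ) < 1 + x + x ^ 2 / 6 := quad_pos hx.le
      have h3 : (0:ℝ) < (3 + x) ^ 2 := by nlinarith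
      rw [sub_nonneg, div_le_div_iff₀ h3 hq]
      nlinarith [hx'.le]
  have h0 : f 0 = 0 := by simp [hf]
  have := hmono (Set.self_mem_Ici) (Set.mem_Ici.2 hs) hs
  rw [h0] at this
  simpa [hf, sub_nonneg] using this

lemma F_ineq {s : ℝ} (hs : 0 ≤ s) :
    s ^ 2 / 2 ≤ (1 + (s + s ^ 2 / 6)) * Real.log (1 + (s + s ^ 2 / 6)) - (s + s ^ 2 / 6) := by
  set F : ℝ → ℝ := fun x =>
    (1 + (x + x ^ 2 / 6)) * Real.log (1 + (x + x ^ 2 / 6)) - (x + x ^ 2 / 6) - x ^ 2 / 2 with hF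
  have hder : ∀ x : ℝ, 0 ≤ x →
      HasDerivAt F ((1 + x / 3) * Real.log (1 + x + x ^ 2 / 6) - x) x := by
    intro x hx
    have hq : (0:ℝ) < 1 + x + x ^ 2 / 6 := quad_pos hx
    have h1 : HasDerivAt (fun y : ℝ => 1 + (y + y ^ 2 / 6)) (1 + x / 3) x := by
      have := ((hasDerivAt_id x).add ((hasDerivAt_pow 2 x).div_const 6)).const_add 1
      refine this.congr_deriv ?_
      push_cast; ring
    have hq' : (0:ℝ) < 1 + (x + x ^ 2 / 6) := by linarith
    have h2 : HasDerivAt (fun y : ℝ => Real.log (1 + (y + y ^ 2 / 6)))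
        ((1 + x / 3) / (1 + (x + x ^ 2 / 6))) x := h1.log hq'.ne'
    have h3 := (h1.mul h2)
    have h4 : HasDerivAt (fun y : ℝ => y + y ^ 2 / 6) (1 + x / 3) x := by
      have := (hasDerivAt_id x).add ((hasDerivAt_pow 2 x).div_const 6)
      refine this.congr_deriv ?_
      push_cast; ring
    have h5 : HasDerivAt (fun y : ℝ => y ^ 2 / 2) x x := by
      have := (hasDerivAt_pow 2 x).div_const 2
      refine this.congr_deriv ?_
      push_cast; ring
    have := (h3.sub h4).sub h5
    refine this.congr_deriv ?_
    field_simp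
    ring
  have hmono : MonotoneOn F (Set.Ici 0) := by
    refine monotoneOn_of_deriv_nonneg (convex_Ici 0) ?_ ?_ ?_
    · exact fun x hx => ((hder x hx).differentiableAt.continuousAt.continuousWithinAt)
    · intro x hx
      rw [interior_Ici] at hx
      exact (hder x (le_of_lt hx)).differentiableAt.differentiableWithinAt
    · intro x hx
      rw [interior_Ici] at hx
      have hx' : (0:ℝ) < x := hx
      rw [(hder x hx.le).deriv]
      have hlog := log_ineq hx.le
      have h13 : (0:ℝ) < 1 + x / 3 := by linarith
      have h3x : (3 + x) ≠ 0 := by nlinarith [hx'.le]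
      have heq : (1 + x / 3) * (3 * x / (3 + x)) = x := by
        field_simp
      have := mul_le_mul_of_nonneg_left hlog h13.le
      rw [heq] at this
      linarith
  have h0 : F 0 = 0 := by simp [hF]
  have := hmono (Set.self_mem_Ici) (Set.mem_Ici.2 hs) hs
  rw [h0] at this
  simp only [hF, sub_nonneg] at this
  linarith




lemma freedman_oneside {Ω : Type*} [MeasureSpace Ω] [IsProbabilityMeasure (ℙ : Measure Ω)]
    (n : ℕ) (ℱ : Filtration ℕ (inferInstance : MeasurableSpace Ω))
    (X : ℕ → Ω → ℝ)
    (hadapt : ∀ t ≤ n, StronglyMeasurable[ℱ t] (X t))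
    (hint : ∀ t ≤ n, Integrable (X t) ℙ)
    (hmart : ∀ t < n, (ℙ[X (t + 1) | ℱ t]) =ᵐ[ℙ] X t)
    (hbdd : ∀ t, 1 ≤ t → t ≤ n → ∀ ω, |X t ω - X (t - 1) ω| ≤ 1)
    (l a v : ℝ) (hl : 0 ≤ l) (hv : 0 < v) :
    (ℙ {ω | a ≤ X n ω - X 0 ω ∧ (∑ τ ∈ Finset.Icc 1 n,
        (ℙ[(fun ω' => (X τ ω' - X (τ - 1) ω') ^ 2) | ℱ (τ - 1)]) ω) ≤ v ^ 2}).toReal ≤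
      Real.exp (-(l * a - (Real.exp l - 1 - l) * v ^ 2)) := by
  set ph : ℝ := Real.exp l - 1 - l with hphdef
  have hph : 0 ≤ ph := by
    have := Real.add_one_le_exp l
    simp only [hphdef]; linarith
  set g : ℕ → Ω → ℝ := fun τ => ℙ[(fun ω' => (X τ ω' - X (τ - 1) ω') ^ 2) | ℱ (τ - 1)] with hg
  set G : ℕ → Ω → ℝ := fun t ω => ∑ τ ∈ Finset.Icc 1 t, g τ ω with hG
  set M : ℕ → Ω → ℝ := fun t ω => Real.exp (l * (X t ω - X 0 ω) - ph * G t ω) with hM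
  -- measurability of X t
  have hXm : ∀ t ≤ n, StronglyMeasurable (X t) := fun t ht => (hadapt t ht).mono (ℱ.le t)
  have hgSM : ∀ τ, StronglyMeasurable[ℱ (τ - 1)] (g τ) := fun τ => stronglyMeasurable_condExp
  have hgm : ∀ τ, StronglyMeasurable (g τ) := fun τ => (hgSM τ).mono (ℱ.le _)
  have hg_nonneg : ∀ τ, 0 ≤ᵐ[ℙ] g τ := fun τ =>
    condExp_nonneg (Filter.Eventually.of_forall fun ω => sq_nonneg _)
  have hg_le_one : ∀ τ, 1 ≤ τ → τ ≤ n → g τ ≤ᵐ[ℙ] fun _ => (1:ℝ) := by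
    intro τ h1 h2
    have hsq : Integrable (fun ω' => (X τ ω' - X (τ - 1) ω') ^ 2) ℙ := by
      refine (integrable_const (1:ℝ)).mono' ?_ ?_
      · exact ((hXm τ h2).sub (hXm (τ-1) (le_trans (Nat.sub_le _ _) h2))).pow 2 |>.aestronglyMeasurable
      · refine Filter.Eventually.of_forall fun ω => ?_
        have := hbdd τ h1 h2 ω
        rw [Real.norm_eq_abs, abs_pow]
        calc |X τ ω - X (τ-1) ω| ^ 2 ≤ 1 ^ 2 := by
              refine pow_le_pow_left₀ (abs_nonneg _) this 2
        _ = 1 := one_pow 2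
    have := condExp_mono (m := ℱ (τ - 1)) (μ := ℙ) hsq (integrable_const 1)
      (Filter.Eventually.of_forall fun ω => by
        have h := hbdd τ h1 h2 ω
        have : |X τ ω - X (τ-1) ω| ^ 2 ≤ 1 := by nlinarith [abs_nonneg (X τ ω - X (τ-1) ω)]
        calc (X τ ω - X (τ-1) ω)^2 = |X τ ω - X (τ-1) ω| ^ 2 := (sq_abs _).symm
        _ ≤ 1 := this)
    refine this.trans ?_
    rw [condExp_const (ℱ.le _)]
  have hG_nonneg : ∀ t, ∀ᵐ ω ∂ℙ, 0 ≤ G t ω := by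
    intro t
    have : ∀ᵐ ω ∂ℙ, ∀ τ ∈ Finset.Icc 1 t, 0 ≤ g τ ω := by
      rw [Filter.eventually_all_finset]
      exact fun τ _ => hg_nonneg τ
    filter_upwards [this] with ω h
    exact Finset.sum_nonneg h
  -- bound on X t - X 0
  have hXbd : ∀ t ≤ n, ∀ ω, |X t ω - X 0 ω| ≤ t := by
    intro t
    induction t with
    | zero => intro _ ω; simp
    | succ k ih =>
      intro hk ω
      have h1 := ih (le_of_lt (Nat.lt_of_lt_of_le (Nat.lt_succ_self k) hk)) ω
      have h2 := hbdd (k+1) (Nat.le_add_left 1 k) hk ω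
      have h3 : (k + 1 : ℕ) - 1 = k := rfl
      rw [h3] at h2
      calc |X (k+1) ω - X 0 ω| = |(X (k+1) ω - X k ω) + (X k ω - X 0 ω)| := by ring_nf
      _ ≤ |X (k+1) ω - X k ω| + |X k ω - X 0 ω| := abs_add_le _ _
      _ ≤ 1 + k := add_le_add h2 h1
      _ = ((k+1 : ℕ) : ℝ) := by push_cast; ring
  -- measurability of M t
  have hMm : ∀ t ≤ n, StronglyMeasurable (M t) := by
    intro t ht
    refine (Real.continuous_exp.comp_stronglyMeasurable ?_)
    refine (((hXm t ht).sub (hXm 0 (Nat.zero_le n))).const_mul l).sub ?_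
    refine StronglyMeasurable.const_mul ?_ ph
    exact Finset.stronglyMeasurable_fun_sum _ fun τ _ => hgm τ
  have hM_int : ∀ t ≤ n, Integrable (M t) ℙ := by
    intro t ht
    refine (integrable_const (Real.exp (l * t))).mono' (hMm t ht).aestronglyMeasurable ?_
    filter_upwards [hG_nonneg t] with ω hGω
    rw [Real.norm_eq_abs, abs_of_pos (Real.exp_pos _), Real.exp_le_exp]
    have h1 : X t ω - X 0 ω ≤ t := le_trans (le_abs_self _) (hXbd t ht ω)
    nlinarith [mul_le_mul_of_nonneg_left h1 hl, mul_nonneg hph hGω]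
  -- supermartingale property
  have hsuper : ∀ t ≤ n, ∫ ω, M t ω ∂ℙ ≤ 1 := by
    intro t
    induction t with
    | zero =>
      intro _
      have : M 0 = fun _ => (1:ℝ) := by
        funext ω; simp [hM, hG]
      rw [this]
      simp
    | succ k ih =>
      intro hk
      have hkn : k ≤ n := le_of_lt (Nat.lt_of_lt_of_le (Nat.lt_succ_self k) hk)
      have hkn' : k < n := Nat.lt_of_lt_of_le (Nat.lt_succ_self k) hk
      set D : Ω → ℝ := fun ω => X (k+1) ω - X k ω with hD
      have hDbd : ∀ ω, |D ω| ≤ 1 := by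
        intro ω
        have := hbdd (k+1) (Nat.le_add_left 1 k) hk ω
        simpa [hD] using this
      have hDm : StronglyMeasurable D := (hXm (k+1) hk).sub (hXm k hkn)
      have hg1 : g (k+1) = ℙ[(fun ω' => D ω' ^ 2) | ℱ k] := by
        simp only [hg, hD, Nat.add_sub_cancel]
      -- A
      set A : Ω → ℝ := fun ω =>
        Real.exp (l * (X k ω - X 0 ω) - ph * G k ω - ph * g (k+1) ω) with hA
      have hASM : StronglyMeasurable[ℱ k] A := by
        refine Real.continuous_exp.comp_stronglyMeasurable ?_
        refine StronglyMeasurable.sub (StronglyMeasurable.sub ?_ ?_) ?_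
        · exact ((hadapt k hkn).sub ((hadapt 0 (Nat.zero_le n)).mono
            (ℱ.mono (Nat.zero_le k)))).const_mul l
        · refine StronglyMeasurable.const_mul ?_ ph
          refine Finset.stronglyMeasurable_fun_sum _ fun τ hτ => ?_
          have hτk : τ - 1 ≤ k := by
            have := (Finset.mem_Icc.1 hτ).2
            omega
          exact (hgSM τ).mono (ℱ.mono hτk)
        · exact StronglyMeasurable.const_mul ((hgSM (k+1)).mono
            (by simp only [Nat.add_sub_cancel]; exact le_refl _)) ph
      have hAnn : ∀ ω, 0 ≤ A ω := fun ω => (Real.exp_pos _).le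
      have hMsplit : M (k+1) = fun ω => A ω * Real.exp (l * D ω) := by
        funext ω
        simp only [hM, hA, hD, hG]
        rw [← Real.exp_add]
        congr 1
        rw [Finset.sum_Icc_succ_top (Nat.le_add_left 1 k)]
        ring
      have hexpD_int : Integrable (fun ω => Real.exp (l * D ω)) ℙ := by
        refine (integrable_const (Real.exp l)).mono'
          ((Real.continuous_exp.comp_stronglyMeasurable (hDm.const_mul l)).aestronglyMeasurable) ?_
        refine Filter.Eventually.of_forall fun ω => ?_
        rw [Real.norm_eq_abs, abs_of_pos (Real.exp_pos _), Real.exp_le_exp]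
        nlinarith [hDbd ω, le_abs_self (D ω), hl]
      have hMk1_int : Integrable (M (k+1)) ℙ := hM_int (k+1) hk
      have hAmul_int : Integrable (A * fun ω => Real.exp (l * D ω)) ℙ := by
        have : (A * fun ω => Real.exp (l * D ω)) = M (k+1) := by
          rw [hMsplit]; rfl
        rw [this]; exact hMk1_int
      -- pull out
      have hpull : ℙ[A * fun ω => Real.exp (l * D ω) | ℱ k] =ᵐ[ℙ]
          A * ℙ[fun ω => Real.exp (l * D ω) | ℱ k] :=
        condExp_mul_of_stronglyMeasurable_left hASM hAmul_int hexpD_int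
      -- conditional bound
      have hcond : ℙ[fun ω => Real.exp (l * D ω) | ℱ k] ≤ᵐ[ℙ] fun ω => 1 + ph * g (k+1) ω := by
        have hquad_int : Integrable (fun ω => 1 + l * D ω + ph * D ω ^ 2) ℙ := by
          refine (integrable_const (1 + l + ph)).mono' ?_ ?_
          · exact (((hDm.const_mul l).const_add 1).add ((hDm.pow 2).const_mul ph)).aestronglyMeasurable
          · refine Filter.Eventually.of_forall fun ω => ?_
            have h1 := hDbd ω
            have h2 : |D ω| ^ 2 ≤ 1 := by nlinarith [abs_nonneg (D ω)]
            rw [Real.norm_eq_abs]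
            have : |1 + l * D ω + ph * D ω ^ 2| ≤ 1 + l * |D ω| + ph * |D ω| ^ 2 := by
              refine (abs_add_le _ _).trans ?_
              refine add_le_add ((abs_add_le _ _).trans ?_) ?_
              · simp only [abs_one]
                refine add_le_add_right ?_ 1
                rw [abs_mul, abs_of_nonneg hl]
              · rw [abs_mul, abs_of_nonneg hph, ← sq_abs, abs_of_nonneg (sq_nonneg _)]
            nlinarith [abs_nonneg (D ω), mul_le_mul_of_nonneg_left h1 hl,
              mul_le_mul_of_nonneg_left h2 hph]
        have hmono := condExp_mono (m := ℱ k) (μ := ℙ) hexpD_int hquad_int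
          (Filter.Eventually.of_forall fun ω => exp_mul_le l (D ω) hl (hDbd ω))
        -- compute condexp of RHS
        have hD_int : Integrable D ℙ := (hint (k+1) hk).sub (hint k hkn)
        have hDsq_int : Integrable (fun ω => D ω ^ 2) ℙ := by
          refine (integrable_const (1:ℝ)).mono' ((hDm.pow 2).aestronglyMeasurable) ?_
          refine Filter.Eventually.of_forall fun ω => ?_
          rw [Real.norm_eq_abs, ← sq_abs, abs_pow, abs_abs]
          nlinarith [hDbd ω, abs_nonneg (D ω)]
        have hsplit : (fun ω => 1 + l * D ω + ph * D ω ^ 2) =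
            (fun _ => (1:ℝ)) + (l • D + ph • fun ω => D ω ^ 2) := by
          funext ω; simp [Pi.add_apply]; ring
        have hDcond : ℙ[D | ℱ k] =ᵐ[ℙ] fun _ => (0:ℝ) := by
          have h1 : ℙ[D | ℱ k] =ᵐ[ℙ] ℙ[X (k+1) | ℱ k] - ℙ[X k | ℱ k] := by
            have := condExp_sub (m := ℱ k) (μ := ℙ) (hint (k+1) hk) (hint k hkn)
            exact this
          refine h1.trans ?_
          have h3 := hmart k hkn'
          rw [condExp_of_stronglyMeasurable (ℱ.le k) (hadapt k hkn) (hint k hkn)]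
          filter_upwards [h3] with ω hω
          simp [hω]
        have hcondRHS : ℙ[fun ω => 1 + l * D ω + ph * D ω ^ 2 | ℱ k] =ᵐ[ℙ]
            fun ω => 1 + ph * g (k+1) ω := by
          rw [hsplit]
          refine (condExp_add (integrable_const 1) ((hD_int.smul l).add (hDsq_int.smul ph)) (ℱ k)).trans ?_
          have h4 := condExp_add (m := ℱ k) (μ := ℙ) (hD_int.smul l) (hDsq_int.smul ph)
          have h5 := condExp_smul (m := ℱ k) (μ := ℙ) l D
          have h6 := condExp_smul (m := ℱ k) (μ := ℙ) ph (fun ω => D ω ^ 2)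
          rw [condExp_const (ℱ.le k)]
          filter_upwards [h4, h5, h6, hDcond] with ω h4ω h5ω h6ω hDω
          simp only [Pi.add_apply, Pi.smul_apply, smul_eq_mul] at *
          rw [h4ω, h5ω, h6ω, hDω, hg1]
          simp
        exact hmono.trans hcondRHS.le
      -- now the integral chain
      have hABm : StronglyMeasurable A := hASM.mono (ℱ.le k)
      have hA_bd : ∀ᵐ ω ∂ℙ, A ω ≤ Real.exp (l * k) := by
        filter_upwards [hG_nonneg k, hg_nonneg (k+1)] with ω h1 h2
        rw [hA]
        simp only
        rw [Real.exp_le_exp]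
        have h3 : X k ω - X 0 ω ≤ k := le_trans (le_abs_self _) (hXbd k hkn ω)
        nlinarith [mul_le_mul_of_nonneg_left h3 hl, mul_nonneg hph h1, mul_nonneg hph h2]
      have hAg_int : Integrable (fun ω => A ω * (1 + ph * g (k+1) ω)) ℙ := by
        refine (integrable_const (Real.exp (l * k) * (1 + ph))).mono' ?_ ?_
        · exact (hABm.mul (((hgm (k+1)).const_mul ph).const_add 1)).aestronglyMeasurable
        · filter_upwards [hA_bd, hg_nonneg (k+1), hg_le_one (k+1) (Nat.le_add_left 1 k) hk]
            with ω h1 h2 h3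
          rw [Real.norm_eq_abs, abs_mul, abs_of_nonneg (hAnn ω)]
          have : |1 + ph * g (k+1) ω| ≤ 1 + ph := by
            rw [abs_of_nonneg (by nlinarith [mul_nonneg hph h2])]
            nlinarith [mul_le_mul_of_nonneg_left h3 hph]
          refine mul_le_mul h1 this (abs_nonneg _) (Real.exp_pos _).le
      have hcondM_int : Integrable (fun ω => A ω * (ℙ[fun ω' => Real.exp (l * D ω') | ℱ k]) ω) ℙ := by
        refine (integrable_condExp (m := ℱ k) (f := M (k+1))).congr ?_
        have h1 : ℙ[M (k+1) | ℱ k] =ᵐ[ℙ] A * ℙ[fun ω => Real.exp (l * D ω) | ℱ k] := by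
          calc ℙ[M (k+1) | ℱ k] = ℙ[A * fun ω => Real.exp (l * D ω) | ℱ k] := by
                rw [hMsplit]; rfl
          _ =ᵐ[ℙ] A * ℙ[fun ω => Real.exp (l * D ω) | ℱ k] := hpull
        exact h1
      calc ∫ ω, M (k+1) ω ∂ℙ = ∫ ω, (ℙ[M (k+1) | ℱ k]) ω ∂ℙ :=
            (integral_condExp (ℱ.le k)).symm
      _ = ∫ ω, A ω * (ℙ[fun ω' => Real.exp (l * D ω') | ℱ k]) ω ∂ℙ := by
            refine integral_congr_ae ?_
            have : ℙ[M (k+1) | ℱ k] =ᵐ[ℙ] A * ℙ[fun ω => Real.exp (l * D ω) | ℱ k] := by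
              calc ℙ[M (k+1) | ℱ k] = ℙ[A * fun ω => Real.exp (l * D ω) | ℱ k] := by
                    rw [hMsplit]; rfl
              _ =ᵐ[ℙ] _ := hpull
            exact this
      _ ≤ ∫ ω, A ω * (1 + ph * g (k+1) ω) ∂ℙ := by
            refine integral_mono_ae hcondM_int hAg_int ?_
            filter_upwards [hcond] with ω hω
            exact mul_le_mul_of_nonneg_left hω (hAnn ω)
      _ ≤ ∫ ω, M k ω ∂ℙ := by
            refine integral_mono_ae hAg_int (hM_int k hkn) ?_
            refine Filter.Eventually.of_forall fun ω => ?_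
            have h1 : 1 + ph * g (k+1) ω ≤ Real.exp (ph * g (k+1) ω) := by
              have := Real.add_one_le_exp (ph * g (k+1) ω)
              linarith
            have h2 : A ω * (1 + ph * g (k+1) ω) ≤ A ω * Real.exp (ph * g (k+1) ω) :=
              mul_le_mul_of_nonneg_left h1 (hAnn ω)
            refine h2.trans (le_of_eq ?_)
            simp only [hA, hM]
            rw [← Real.exp_add]
            congr 1
            ring
      _ ≤ 1 := ih hkn
  -- Markov
  set r : ℝ := Real.exp (l * a - ph * v ^ 2) with hr
  have hrpos : 0 < r := Real.exp_pos _
  have hsub : {ω | a ≤ X n ω - X 0 ω ∧ G n ω ≤ v ^ 2} ⊆ {ω | r ≤ M n ω} := by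
    intro ω ⟨h1, h2⟩
    simp only [Set.mem_setOf_eq, hM, hr]
    rw [Real.exp_le_exp]
    have h3 : l * a ≤ l * (X n ω - X 0 ω) := mul_le_mul_of_nonneg_left h1 hl
    have h4 : ph * G n ω ≤ ph * v ^ 2 := mul_le_mul_of_nonneg_left h2 hph
    linarith
  have hmarkov := mul_meas_ge_le_integral_of_nonneg
    (f := M n) (μ := ℙ)
    (Filter.Eventually.of_forall fun ω => (Real.exp_pos _).le)
    (hM_int n le_rfl) r
  have h5 : (ℙ {ω | a ≤ X n ω - X 0 ω ∧ G n ω ≤ v ^ 2}).toReal ≤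
      (ℙ {ω | r ≤ M n ω}).toReal := by
    refine ENNReal.toReal_mono (measure_ne_top _ _) (measure_mono hsub)
  have h6 : (ℙ {ω | r ≤ M n ω}).toReal ≤ 1 / r := by
    rw [le_div_iff₀ hrpos]
    calc (ℙ {ω | r ≤ M n ω}).toReal * r = r * (ℙ {ω | r ≤ M n ω}).toReal := mul_comm _ _
    _ ≤ ∫ ω, M n ω ∂ℙ := hmarkov
    _ ≤ 1 := hsuper n le_rfl
  have h7 : (1:ℝ) / r = Real.exp (-(l * a - ph * v ^ 2)) := by
    rw [hr, Real.exp_neg, one_div]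
  calc (ℙ {ω | a ≤ X n ω - X 0 ω ∧ (∑ τ ∈ Finset.Icc 1 n,
        (ℙ[(fun ω' => (X τ ω' - X (τ - 1) ω') ^ 2) | ℱ (τ - 1)]) ω) ≤ v ^ 2}).toReal
      = (ℙ {ω | a ≤ X n ω - X 0 ω ∧ G n ω ≤ v ^ 2}).toReal := rfl
  _ ≤ (ℙ {ω | r ≤ M n ω}).toReal := h5
  _ ≤ 1 / r := h6
  _ = Real.exp (-(l * a - ph * v ^ 2)) := h7

lemma choose_l (ε v : ℝ) (hε : 0 ≤ ε) (hv : 0 < v) :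
    ∃ l : ℝ, 0 ≤ l ∧
      ε ≤ l * (ε / 3 + v * Real.sqrt (2 * ε)) - (Real.exp l - 1 - l) * v ^ 2 := by
  set s : ℝ := Real.sqrt (2 * ε) / v with hs
  have hs0 : 0 ≤ s := div_nonneg (Real.sqrt_nonneg _) hv.le
  set c : ℝ := s + s ^ 2 / 6 with hc
  have hc0 : 0 ≤ c := by positivity
  refine ⟨Real.log (1 + c), Real.log_nonneg (by linarith), ?_⟩
  have hexp : Real.exp (Real.log (1 + c)) = 1 + c := Real.exp_log (by linarith)
  have hsq : Real.sqrt (2 * ε) = s * v := by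
    rw [hs]; field_simp
  have hε2 : ε = v ^ 2 * s ^ 2 / 2 := by
    have : (Real.sqrt (2 * ε)) ^ 2 = 2 * ε := Real.sq_sqrt (by linarith)
    rw [hsq] at this
    nlinarith
  have hF := F_ineq hs0
  rw [hexp]
  set l : ℝ := Real.log (1 + c)
  have key : l * (ε / 3 + v * Real.sqrt (2 * ε)) - (1 + c - 1 - l) * v ^ 2 =
      v ^ 2 * ((1 + c) * l - c) - v ^ 2 * s ^ 2 / 2 + ε := by
    rw [hsq, hε2, hc]
    ring
  rw [key]
  have : v ^ 2 * (s ^ 2 / 2) ≤ v ^ 2 * ((1 + c) * l - c) := by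
    refine mul_le_mul_of_nonneg_left ?_ (by positivity)
    rw [hc]
    exact hF
  linarith


/-- Let `(X(t))_{t=0}^{n}` be a martingale with respect to a filtration
`(ℱ(t))_{t=0}^{n}` whose increments satisfy `|X(t) − X(t−1)| ≤ 1` for `t ∈ [n]`, and let
`⟨X⟩_n = Σ_{τ=1}^{n} E[(X(τ) − X(τ−1))² | ℱ(τ−1)]` be its quadratic characteristic.
Then for all `ε ≥ 0` and `v > 0`:
`P[|X(n) − X(0)| ≥ ε/3 + v·sqrt(2ε)] ≤ 2·(e^{−ε} + P[⟨X⟩_n > v²])`. -/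
theorem stmt14 {Ω : Type*} [MeasureSpace Ω] [IsProbabilityMeasure (ℙ : Measure Ω)]
    (n : ℕ) (ℱ : Filtration ℕ (inferInstance : MeasurableSpace Ω))
    (X : ℕ → Ω → ℝ)
    (hadapt : ∀ t ≤ n, StronglyMeasurable[ℱ t] (X t))
    (hint : ∀ t ≤ n, Integrable (X t) ℙ)
    (hmart : ∀ t < n, (ℙ[X (t + 1) | ℱ t]) =ᵐ[ℙ] X t)
    (hbdd : ∀ t, 1 ≤ t → t ≤ n → ∀ ω, |X t ω - X (t - 1) ω| ≤ 1)
    (ε v : ℝ) (hε : 0 ≤ ε) (hv : 0 < v) :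
    (ℙ {ω | ε / 3 + v * Real.sqrt (2 * ε) ≤ |X n ω - X 0 ω|}).toReal ≤
      2 * (Real.exp (-ε) +
        (ℙ {ω | v ^ 2 < ∑ τ ∈ Finset.Icc 1 n,
          (ℙ[(fun ω' => (X τ ω' - X (τ - 1) ω') ^ 2) | ℱ (τ - 1)]) ω}).toReal) := by
  obtain ⟨l, hl0, hlnum⟩ := choose_l ε v hε hv
  set a : ℝ := ε / 3 + v * Real.sqrt (2 * ε) with ha
  set g : ℕ → Ω → ℝ := fun τ => ℙ[(fun ω' => (X τ ω' - X (τ - 1) ω') ^ 2) | ℱ (τ - 1)] with hg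
  set G : Ω → ℝ := fun ω => ∑ τ ∈ Finset.Icc 1 n, g τ ω with hG
  -- one-sided for X
  have h1 := freedman_oneside n ℱ X hadapt hint hmart hbdd l a v hl0 hv
  -- one-sided for -X
  set Y : ℕ → Ω → ℝ := fun t ω => -X t ω with hY
  have hadapt' : ∀ t ≤ n, StronglyMeasurable[ℱ t] (Y t) := fun t ht => (hadapt t ht).neg
  have hint' : ∀ t ≤ n, Integrable (Y t) ℙ := fun t ht => (hint t ht).neg
  have hmart' : ∀ t < n, (ℙ[Y (t + 1) | ℱ t]) =ᵐ[ℙ] Y t := by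
    intro t ht
    have h0 : Y (t+1) = -(X (t+1)) := rfl
    rw [h0]
    refine (condExp_neg (X (t+1)) (ℱ t)).trans ?_
    filter_upwards [hmart t ht] with ω hω
    simp [hY, hω]
  have hbdd' : ∀ t, 1 ≤ t → t ≤ n → ∀ ω, |Y t ω - Y (t - 1) ω| ≤ 1 := by
    intro t h1t h2t ω
    have := hbdd t h1t h2t ω
    have heq : Y t ω - Y (t-1) ω = -(X t ω - X (t-1) ω) := by simp [hY]; ring
    rw [heq, abs_neg]
    exact this
  have h2 := freedman_oneside n ℱ Y hadapt' hint' hmart' hbdd' l a v hl0 hv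
  have hgY : ∀ τ : ℕ, (fun ω' => (Y τ ω' - Y (τ - 1) ω') ^ 2) =
      (fun ω' => (X τ ω' - X (τ - 1) ω') ^ 2) := by
    intro τ; funext ω'; simp [hY]; ring
  simp only [hgY] at h2
  -- sets
  set S1 : Set Ω := {ω | a ≤ X n ω - X 0 ω ∧ G ω ≤ v ^ 2} with hS1
  set S2 : Set Ω := {ω | a ≤ Y n ω - Y 0 ω ∧ G ω ≤ v ^ 2} with hS2
  set T : Set Ω := {ω | v ^ 2 < G ω} with hT
  have hsubset : {ω | a ≤ |X n ω - X 0 ω|} ⊆ S1 ∪ S2 ∪ T := by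
    intro ω hω
    simp only [Set.mem_setOf_eq] at hω
    by_cases hGω : G ω ≤ v ^ 2
    · rcases le_abs.1 hω with h | h
      · exact Or.inl (Or.inl ⟨h, hGω⟩)
      · refine Or.inl (Or.inr ⟨?_, hGω⟩)
        simp only [hY, hS2, Set.mem_setOf_eq]
        linarith
    · exact Or.inr (lt_of_not_ge hGω)
  have hmeas : ℙ {ω | a ≤ |X n ω - X 0 ω|} ≤ ℙ S1 + ℙ S2 + ℙ T :=
    le_trans (measure_mono hsubset)
      (le_trans (measure_union_le _ _) (add_le_add_left (measure_union_le _ _) _))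
  have htoReal : (ℙ {ω | a ≤ |X n ω - X 0 ω|}).toReal ≤
      (ℙ S1).toReal + (ℙ S2).toReal + (ℙ T).toReal := by
    have hne : ℙ S1 + ℙ S2 + ℙ T ≠ ⊤ := by
      simp [ENNReal.add_ne_top, measure_ne_top]
    refine le_trans (ENNReal.toReal_mono hne hmeas) ?_
    rw [ENNReal.toReal_add (by simp [ENNReal.add_ne_top, measure_ne_top]) (measure_ne_top _ _),
      ENNReal.toReal_add (measure_ne_top _ _) (measure_ne_top _ _)]
  have hexp_le : Real.exp (-(l * a - (Real.exp l - 1 - l) * v ^ 2)) ≤ Real.exp (-ε) := by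
    rw [Real.exp_le_exp]
    linarith
  have hS1le : (ℙ S1).toReal ≤ Real.exp (-ε) := le_trans h1 hexp_le
  have hS2le : (ℙ S2).toReal ≤ Real.exp (-ε) := le_trans h2 hexp_le
  have hTnn : 0 ≤ (ℙ T).toReal := ENNReal.toReal_nonneg
  have hfinal : (ℙ {ω | a ≤ |X n ω - X 0 ω|}).toReal ≤
      2 * (Real.exp (-ε) + (ℙ T).toReal) := by linarith
  exact hfinal
end

section
/- Let d, λ, R > 0 and define g(x) := (1/(16d)) · max{ d·λ·x, x²/R, (4/27)·x³ } for x > 0. Then ∫₀¹ x/g(x) dx ≤ 16·sqrt(27·d/λ). -/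
open MeasureTheory ProbabilityTheory Real
open scoped ENNReal BigOperators

/-- For `d, λ, R > 0` and
`g(x) = (1/(16d)) · max{ d·λ·x, x²/R, (4/27)·x³ }`, one has
`∫₀¹ x/g(x) dx ≤ 16·sqrt(27·d/λ)`. -/
theorem stmt16 (d lam R : ℝ) (hd : 0 < d) (hlam : 0 < lam) (hR : 0 < R) :
    ∫ x in (0:ℝ)..1,
        x / ((1 / (16 * d)) * max (d * lam * x) (max (x ^ 2 / R) ((4 / 27) * x ^ 3)))
      ≤ 16 * Real.sqrt (27 * d / lam) := by
  set f : ℝ → ℝ := fun x =>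
    x / ((1 / (16 * d)) * max (d * lam * x) (max (x ^ 2 / R) ((4 / 27) * x ^ 3))) with hf
  have hden1 : ∀ x : ℝ, 0 < x →
      lam * x / 16 ≤ (1 / (16 * d)) * max (d * lam * x) (max (x ^ 2 / R) ((4 / 27) * x ^ 3)) := by
    intro x hx
    calc lam * x / 16 = (1 / (16 * d)) * (d * lam * x) := by field_simp
    _ ≤ _ := by
        apply mul_le_mul_of_nonneg_left (le_max_left _ _) (by positivity)
  have hden2 : ∀ x : ℝ, 0 < x →
      x ^ 3 / (108 * d) ≤ (1 / (16 * d)) * max (d * lam * x) (max (x ^ 2 / R) ((4 / 27) * x ^ 3)) := by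
    intro x hx
    calc x ^ 3 / (108 * d) = (1 / (16 * d)) * ((4 / 27) * x ^ 3) := by field_simp; ring
    _ ≤ _ := by
        apply mul_le_mul_of_nonneg_left (le_max_of_le_right (le_max_right _ _)) (by positivity)
  have hbound1 : ∀ x : ℝ, 0 ≤ x → f x ≤ 16 / lam := by
    intro x hx
    rcases eq_or_lt_of_le hx with h | h
    · simp [hf, ← h]
      positivity
    · calc f x ≤ x / (lam * x / 16) :=
            div_le_div_of_nonneg_left h.le (by positivity) (hden1 x h)
      _ = 16 / lam := by field_simp
  have hnonneg : ∀ x : ℝ, 0 ≤ x → 0 ≤ f x := by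
    intro x hx
    apply div_nonneg hx
    have h0 : (0:ℝ) ≤ d * lam * x := by positivity
    exact mul_nonneg (by positivity) (le_trans h0 (le_max_left _ _))
  have hbound2 : ∀ x : ℝ, 0 < x → f x ≤ 108 * d / x ^ 2 := by
    intro x hx
    calc f x ≤ x / (x ^ 3 / (108 * d)) :=
          div_le_div_of_nonneg_left hx.le (by positivity) (hden2 x hx)
    _ = 108 * d / x ^ 2 := by field_simp
  have hmeas : Measurable f := by
    apply Measurable.div measurable_id
    fun_prop
  have hInt : IntervalIntegrable f volume 0 1 := by
    rw [intervalIntegrable_iff]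
    apply Measure.integrableOn_of_bounded (M := 16 / lam)
    · rw [Set.uIoc_of_le zero_le_one, Real.volume_Ioc]; exact ENNReal.ofReal_ne_top
    · exact hmeas.aestronglyMeasurable
    · filter_upwards [ae_restrict_mem measurableSet_uIoc] with x hx
      rw [Set.uIoc_of_le zero_le_one] at hx
      rw [Real.norm_eq_abs, abs_of_nonneg (hnonneg x hx.1.le)]
      exact hbound1 x hx.1.le
  set a : ℝ := Real.sqrt (27 * d * lam) / 2 with ha
  have hapos : 0 < a := by
    have := Real.sqrt_pos.mpr (show (0:ℝ) < 27 * d * lam by positivity)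
    positivity
  set t : ℝ := Real.sqrt (27 * d / lam) with ht
  have htpos : 0 < t := Real.sqrt_pos.mpr (by positivity)
  have ht2 : t ^ 2 = 27 * d / lam := Real.sq_sqrt (by positivity)
  have hsq : Real.sqrt (27 * d * lam) = t * lam := by
    rw [show 27 * d * lam = (27 * d / lam) * lam ^ 2 by field_simp,
      Real.sqrt_mul (by positivity), Real.sqrt_sq hlam.le, ht]
  have haval : a = t * lam / 2 := by rw [ha, hsq]
  by_cases hcase : 1 ≤ a
  · have h1 : ∫ x in (0:ℝ)..1, f x ≤ ∫ x in (0:ℝ)..1, (16 / lam : ℝ) :=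
      intervalIntegral.integral_mono_on zero_le_one hInt intervalIntegrable_const
        (fun x hx => hbound1 x hx.1)
    rw [intervalIntegral.integral_const] at h1
    simp at h1
    -- from 1 ≤ a, t * lam ≥ 2, so 16 / lam ≤ 8 * t ≤ 16 * t
    have h2 : 2 ≤ t * lam := by rw [haval] at hcase; linarith
    have h3 : 16 / lam ≤ 16 * t := by
      rw [div_le_iff₀ hlam]
      nlinarith
    calc (∫ x in (0:ℝ)..1, f x) ≤ 16 / lam := h1
    _ ≤ 16 * t := h3
  · push_neg at hcase
    have hIa : IntervalIntegrable f volume 0 a := by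
      apply hInt.mono_set
      rw [Set.uIcc_of_le hapos.le, Set.uIcc_of_le zero_le_one]
      exact Set.Icc_subset_Icc_right hcase.le
    have hIb : IntervalIntegrable f volume a 1 := by
      apply hInt.mono_set
      rw [Set.uIcc_of_le hcase.le, Set.uIcc_of_le zero_le_one]
      exact Set.Icc_subset_Icc_left hapos.le
    rw [← intervalIntegral.integral_add_adjacent_intervals hIa hIb]
    have h1 : ∫ x in (0:ℝ)..a, f x ≤ 8 * t := by
      have := intervalIntegral.integral_mono_on hapos.le hIa intervalIntegrable_const
        (fun x hx => hbound1 x hx.1)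
      rw [intervalIntegral.integral_const] at this
      have heq : (a - 0) • (16 / lam : ℝ) = 8 * t := by
        rw [smul_eq_mul, haval]; field_simp; ring
      linarith [heq ▸ this]
    have h2 : ∫ x in a..(1:ℝ), f x ≤ 8 * t := by
      have hzint : IntervalIntegrable (fun x : ℝ => 108 * d * x ^ (-2 : ℤ)) volume a 1 := by
        apply IntervalIntegrable.const_mul
        apply intervalIntegral.intervalIntegrable_zpow
        right
        rw [Set.uIcc_of_le hcase.le]
        exact fun h => absurd h.1 (not_le.mpr hapos)
      have hmono : ∫ x in a..(1:ℝ), f x ≤ ∫ x in a..(1:ℝ), 108 * d * x ^ (-2 : ℤ) := by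
        apply intervalIntegral.integral_mono_on hcase.le hIb hzint
        intro x hx
        have hxpos : 0 < x := lt_of_lt_of_le hapos hx.1
        calc f x ≤ 108 * d / x ^ 2 := hbound2 x hxpos
        _ = 108 * d * x ^ (-2 : ℤ) := by
            rw [zpow_neg, div_eq_mul_inv]
            norm_num
      have hval : ∫ x in a..(1:ℝ), 108 * d * x ^ (-2 : ℤ) = 108 * d * (a⁻¹ - 1) := by
        rw [intervalIntegral.integral_const_mul, integral_zpow]
        · norm_num
          exact Or.inl (by ring)
        · right
          constructor
          · decide
          · rw [Set.uIcc_of_le hcase.le]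
            exact fun h => absurd h.1 (not_le.mpr hapos)
      have hfin : 108 * d * (a⁻¹ - 1) ≤ 8 * t := by
        have hkey : 108 * d * a⁻¹ = 8 * t := by
          rw [haval]
          have ht2' : t ^ 2 * lam = 27 * d := by rw [ht2]; field_simp
          have hne : t * lam / 2 ≠ 0 := by positivity
          rw [← div_eq_mul_inv, div_eq_iff hne]
          linear_combination (-4) * ht2'
        nlinarith
      linarith [hmono, hval ▸ hmono]
    linarith
end
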